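/- arXiv:1412.8464 — 5 statements merged into one kernel-verified Lean document; each statement's English description precedes it below -/
import Mathlib

section
/- Fix m ∈ ℝ^p and v ∈ ℝ_{>0}^p and an invertible matrix Ψ ∈ ℝ^{p×p}. The function γ ↦ D_KL[N(m, Diag(v)) ‖ N(0, (Ψᵀ Diag(γ)^{-1} Ψ)^{-1})], considered over γ ∈ ℝ_{>0}^p, attains its minimum at γ_k* = (∑_j ψ_{kj} m_j)² + ∑_j ψ_{kj}² v_j for each k. -/
open Finset Matrix

/-- Closed-form KL divergence between multivariate Gaussians
`N(m, S₁)` and `N(0, S₂)` on `ℝ^p`: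
`KL = ½ (tr(S₂⁻¹ S₁) + mᵀ S₂⁻¹ m − p + log det S₂ − log det S₁)`. -/
noncomputable def klGaussZeroMean {p : ℕ} (m : Fin p → ℝ)
    (S₁ S₂ : Matrix (Fin p) (Fin p) ℝ) : ℝ :=
  (1 / 2) * ((S₂⁻¹ * S₁).trace + dotProduct m (S₂⁻¹.mulVec m) - (p : ℝ) +
    Real.log S₂.det - Real.log S₁.det)

lemma trace_aux {p : ℕ} (Ψ : Matrix (Fin p) (Fin p) ℝ) (g v : Fin p → ℝ) :
    (Ψᵀ * Matrix.diagonal g * Ψ * Matrix.diagonal v).trace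
      = ∑ k, g k * ∑ j, (Ψ k j) ^ 2 * v j := by
  have hA : ∀ i j, (Ψᵀ * Matrix.diagonal g * Ψ) i j = ∑ k, Ψ k i * g k * Ψ k j := by
    intro i j
    rw [Matrix.mul_apply]
    simp [Matrix.mul_diagonal, Matrix.transpose_apply]
  simp only [Matrix.trace, Matrix.diag_apply, Matrix.mul_diagonal, hA, Finset.mul_sum]
  rw [Finset.sum_comm]
  simp only [Finset.sum_mul]
  exact Finset.sum_congr rfl fun k _ => Finset.sum_congr rfl fun i _ => by ring

lemma quad_aux {p : ℕ} (Ψ : Matrix (Fin p) (Fin p) ℝ) (g m : Fin p → ℝ) :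
    dotProduct m ((Ψᵀ * Matrix.diagonal g * Ψ).mulVec m)
      = ∑ k, g k * (∑ j, Ψ k j * m j) ^ 2 := by
  rw [← Matrix.mulVec_mulVec, ← Matrix.mulVec_mulVec, dotProduct_mulVec,
    Matrix.vecMul_transpose]
  have h : (Matrix.diagonal g).mulVec (Ψ.mulVec m) = fun k => g k * (Ψ.mulVec m k) := by
    ext k; simp [Matrix.mulVec_diagonal]
  rw [h]
  simp only [dotProduct, Matrix.mulVec, dotProduct]
  exact Finset.sum_congr rfl fun k _ => by ring

lemma kl_eval {p : ℕ} (m v : Fin p → ℝ) (Ψ : Matrix (Fin p) (Fin p) ℝ)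
    (hΨ : IsUnit Ψ.det) (γ : Fin p → ℝ) (hγ : ∀ k, 0 < γ k) :
    klGaussZeroMean m (Matrix.diagonal v) ((Ψᵀ * (Matrix.diagonal γ)⁻¹ * Ψ)⁻¹)
      = (1 / 2) * (∑ k, (((∑ j, Ψ k j * m j) ^ 2 + ∑ j, (Ψ k j) ^ 2 * v j) / γ k
          + Real.log (γ k))
        + (- (p : ℝ) - Real.log (Ψ.det ^ 2) - Real.log (Matrix.diagonal v).det)) := by
  have hΨ0 : Ψ.det ≠ 0 := hΨ.ne_zero
  have hd : (Matrix.diagonal γ)⁻¹ = Matrix.diagonal (fun k => (γ k)⁻¹) := by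
    apply Matrix.inv_eq_right_inv
    rw [Matrix.diagonal_mul_diagonal]
    convert Matrix.diagonal_one using 2
    exact funext fun k => mul_inv_cancel₀ (hγ k).ne'
  set g : Fin p → ℝ := fun k => (γ k)⁻¹ with hg
  set A : Matrix (Fin p) (Fin p) ℝ := Ψᵀ * Matrix.diagonal g * Ψ with hA
  have hdetA : A.det = Ψ.det ^ 2 * ∏ k, g k := by
    rw [hA, Matrix.det_mul, Matrix.det_mul, Matrix.det_transpose, Matrix.det_diagonal]
    ring
  have hprod : (∏ k, g k) ≠ 0 := by
    refine Finset.prod_ne_zero_iff.2 fun k _ => ?_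
    exact inv_ne_zero (hγ k).ne'
  have hdetA0 : A.det ≠ 0 := by
    rw [hdetA]; exact mul_ne_zero (pow_ne_zero _ hΨ0) hprod
  have hUnitA : IsUnit A.det := isUnit_iff_ne_zero.2 hdetA0
  have hinv : A⁻¹⁻¹ = A := Matrix.nonsing_inv_nonsing_inv A hUnitA
  have hlog : Real.log A⁻¹.det
      = - Real.log (Ψ.det ^ 2) + ∑ k, Real.log (γ k) := by
    rw [Matrix.det_nonsing_inv, Ring.inverse_eq_inv', Real.log_inv, hdetA,
      Real.log_mul (pow_ne_zero _ hΨ0) hprod, Real.log_prod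
        (fun k _ => inv_ne_zero (hγ k).ne')]
    simp only [hg, Real.log_inv]
    rw [Finset.sum_neg_distrib]
    ring
  rw [klGaussZeroMean, hd, ← hA, hinv, hlog, trace_aux, quad_aux]
  have hsum : ∑ k, g k * ∑ j, Ψ k j ^ 2 * v j + ∑ k, g k * (∑ j, Ψ k j * m j) ^ 2
      = ∑ k, ((∑ j, Ψ k j * m j) ^ 2 + ∑ j, Ψ k j ^ 2 * v j) / γ k := by
    rw [← Finset.sum_add_distrib]
    refine Finset.sum_congr rfl fun k _ => ?_
    rw [hg, div_eq_mul_inv]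
    ring
  rw [hsum, Finset.sum_add_distrib]
  ring

/-- The F-step solution: for fixed `m` and positive variances `v` and invertible `Ψ`,
the map `γ ↦ D_KL[N(m, Diag v) ‖ N(0, (Ψᵀ (Diag γ)⁻¹ Ψ)⁻¹)]` over positive `γ`
attains its minimum at `γ* k = (∑ j, ψ k j * m j)² + ∑ j, (ψ k j)² * v j`. -/
theorem kl_gaussian_min_gamma {p : ℕ} (m v : Fin p → ℝ) (hv : ∀ j, 0 < v j)
    (Ψ : Matrix (Fin p) (Fin p) ℝ) (hΨ : IsUnit Ψ.det) :
    IsMinOn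
      (fun γ : Fin p → ℝ =>
        klGaussZeroMean m (Matrix.diagonal v)
          ((Ψᵀ * (Matrix.diagonal γ)⁻¹ * Ψ)⁻¹))
      {γ : Fin p → ℝ | ∀ k, 0 < γ k}
      (fun k => (∑ j, Ψ k j * m j) ^ 2 + ∑ j, (Ψ k j) ^ 2 * v j) := by
  set c : Fin p → ℝ := fun k => (∑ j, Ψ k j * m j) ^ 2 + ∑ j, (Ψ k j) ^ 2 * v j with hc
  have hcpos : ∀ k, 0 < c k := by
    intro k
    have hrow : ∃ j, Ψ k j ≠ 0 := by
      by_contra h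
      push_neg at h
      have : Ψ.det = 0 := Matrix.det_eq_zero_of_row_eq_zero k h
      exact hΨ.ne_zero this
    obtain ⟨j, hj⟩ := hrow
    have h2 : 0 < ∑ j, (Ψ k j) ^ 2 * v j := by
      refine Finset.sum_pos' (fun i _ => mul_nonneg (sq_nonneg _) (hv i).le) ⟨j, mem_univ j, ?_⟩
      exact mul_pos (by positivity) (hv j)
    have h1 : 0 ≤ (∑ j, Ψ k j * m j) ^ 2 := sq_nonneg _
    rw [hc]; positivity
  rw [isMinOn_iff]
  intro γ hγ
  have hγ' : ∀ k, 0 < γ k := hγ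
  rw [kl_eval m v Ψ hΨ γ hγ', kl_eval m v Ψ hΨ c hcpos]
  have key : ∑ k, (c k / c k + Real.log (c k))
      ≤ ∑ k, (c k / γ k + Real.log (γ k)) := by
    refine Finset.sum_le_sum fun k _ => ?_
    have h1 : Real.log (c k / γ k) ≤ c k / γ k - 1 :=
      Real.log_le_sub_one_of_pos (div_pos (hcpos k) (hγ' k))
    rw [Real.log_div (hcpos k).ne' (hγ' k).ne'] at h1
    rw [div_self (hcpos k).ne']
    linarith
  linarith
end

section
/- For fixed γ ∈ ℝ_{>0}^p, the free variational energy F(m,v) = F₁(m,v) + F₂(m,γ) + F₃(v,γ), where F₁(m,v) = ∑_i [y_i ∑_j φ_{ij} m_j + η_i exp(−∑_j φ_{ij} m_j + ∑_j φ_{ij}² v_j/2)], F₂(m,γ) = (1/2)∑_k γ_k^{-1}(∑_j ψ_{kj} m_j)², and F₃(v,γ) = (1/2)∑_{k,j} γ_k^{-1} ψ_{kj}² v_j − (1/2)∑_j log v_j + (1/2)∑_k log γ_k, is jointly convex in (m, v) on ℝ^p × ℝ_{>0}^p. -/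
open Finset

section Helpers

variable {E : Type*} [AddCommGroup E] [Module ℝ E] {s : Set E}

lemma myConvexOn_add {f g : E → ℝ} (hf : ConvexOn ℝ s f) (hg : ConvexOn ℝ s g) :
    ConvexOn ℝ s (fun x => f x + g x) := hf.add hg

lemma myConvexOn_const_mul {f : E → ℝ} (c : ℝ) (hc : 0 ≤ c) (hf : ConvexOn ℝ s f) :
    ConvexOn ℝ s (fun x => c * f x) := by
  simpa [smul_eq_mul] using hf.smul hc

lemma myConvexOn_sum {ι : Type*} (hs : Convex ℝ s) (t : Finset ι) {f : ι → E → ℝ}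
    (h : ∀ i ∈ t, ConvexOn ℝ s (f i)) :
    ConvexOn ℝ s (fun x => ∑ i ∈ t, f i x) := by
  classical
  induction t using Finset.induction_on with
  | empty => simpa using convexOn_const (0 : ℝ) hs
  | @insert a t hni ih =>
    simp only [Finset.sum_insert hni]
    exact myConvexOn_add (h a (Finset.mem_insert_self a t))
      (ih fun i hi => h i (Finset.mem_insert_of_mem hi))

lemma myConvexOn_linear (hs : Convex ℝ s) {f : E → ℝ} (hf : IsLinearMap ℝ f) :
    ConvexOn ℝ s f := (IsLinearMap.mk' f hf).convexOn hs

lemma myConvexOn_exp_linear (hs : Convex ℝ s) {f : E → ℝ} (hf : IsLinearMap ℝ f) :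
    ConvexOn ℝ s (fun x => Real.exp (f x)) := by
  have h := convexOn_exp.comp_linearMap (IsLinearMap.mk' f hf)
  exact h.subset (fun x _ => Set.mem_univ _) hs

lemma myConvexOn_sq_linear (hs : Convex ℝ s) {f : E → ℝ} (hf : IsLinearMap ℝ f) :
    ConvexOn ℝ s (fun x => (f x) ^ 2) := by
  have h := (even_two.convexOn_pow (𝕜 := ℝ)).comp_linearMap (IsLinearMap.mk' f hf)
  exact h.subset (fun x _ => Set.mem_univ _) hs

end Helpers

/-- For fixed positive `γ`, the free variational energy
`F(m,v) = F₁(m,v) + F₂(m,γ) + F₃(v,γ)` is jointly convex in `(m, v)`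
on `ℝ^p × ℝ_{>0}^p`. -/
theorem FVE_jointly_convex {n p : ℕ} (y η : Fin n → ℝ) (φ : Fin n → Fin p → ℝ)
    (ψ : Fin p → Fin p → ℝ) (γ : Fin p → ℝ)
    (hy : ∀ i, 0 ≤ y i) (hη : ∀ i, 0 < η i) (hγ : ∀ k, 0 < γ k) :
    ConvexOn ℝ {mv : (Fin p → ℝ) × (Fin p → ℝ) | ∀ j, 0 < mv.2 j}
      (fun mv : (Fin p → ℝ) × (Fin p → ℝ) =>
        (∑ i, (y i * ∑ j, φ i j * mv.1 j +
          η i * Real.exp (-(∑ j, φ i j * mv.1 j) + (∑ j, (φ i j) ^ 2 * mv.2 j) / 2)))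
        + (1 / 2) * ∑ k, (γ k)⁻¹ * (∑ j, ψ k j * mv.1 j) ^ 2
        + ((1 / 2) * ∑ k, ∑ j, (γ k)⁻¹ * (ψ k j) ^ 2 * mv.2 j
            - (1 / 2) * ∑ j, Real.log (mv.2 j)
            + (1 / 2) * ∑ k, Real.log (γ k))) := by
  set S : Set ((Fin p → ℝ) × (Fin p → ℝ)) := {mv | ∀ j, 0 < mv.2 j} with hSdef
  have hS : Convex ℝ S := by
    intro x hx z hz a b ha hb hab
    intro j
    simp only [Prod.snd_add, Prod.smul_snd, Pi.add_apply, Pi.smul_apply, smul_eq_mul]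
    rcases ha.lt_or_eq with h | h
    · exact add_pos_of_pos_of_nonneg (mul_pos h (hx j)) (mul_nonneg hb (hz j).le)
    · have hb1 : b = 1 := by linarith
      simp [← h, hb1]
      exact hz j
  -- linearity facts
  have hlin1 : ∀ c : Fin p → ℝ,
      IsLinearMap ℝ (fun mv : (Fin p → ℝ) × (Fin p → ℝ) => ∑ j, c j * mv.1 j) := by
    intro c
    constructor
    · intro a b
      simp [mul_add, Finset.sum_add_distrib]
    · intro r a
      simp only [Prod.smul_fst, Pi.smul_apply, smul_eq_mul]
      rw [Finset.mul_sum]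
      exact Finset.sum_congr rfl fun j _ => by ring
  have hlin2 : ∀ c : Fin p → ℝ,
      IsLinearMap ℝ (fun mv : (Fin p → ℝ) × (Fin p → ℝ) => ∑ j, c j * mv.2 j) := by
    intro c
    constructor
    · intro a b
      simp [mul_add, Finset.sum_add_distrib]
    · intro r a
      simp only [Prod.smul_snd, Pi.smul_apply, smul_eq_mul]
      rw [Finset.mul_sum]
      exact Finset.sum_congr rfl fun j _ => by ring
  have hlinE : ∀ i : Fin n,
      IsLinearMap ℝ (fun mv : (Fin p → ℝ) × (Fin p → ℝ) =>
        -(∑ j, φ i j * mv.1 j) + (∑ j, (φ i j) ^ 2 * mv.2 j) / 2) := by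
    intro i
    constructor
    · intro a b
      simp only [Prod.fst_add, Prod.snd_add, Pi.add_apply, mul_add,
        Finset.sum_add_distrib]
      ring
    · intro r a
      simp only [Prod.smul_fst, Prod.smul_snd, Pi.smul_apply, smul_eq_mul]
      have h1 : ∑ j, φ i j * (r * a.1 j) = r * ∑ j, φ i j * a.1 j := by
        rw [Finset.mul_sum]; exact Finset.sum_congr rfl fun j _ => by ring
      have h2 : ∑ j, (φ i j) ^ 2 * (r * a.2 j) = r * ∑ j, (φ i j) ^ 2 * a.2 j := by
        rw [Finset.mul_sum]; exact Finset.sum_congr rfl fun j _ => by ring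
      rw [h1, h2]; ring
  apply myConvexOn_add
  apply myConvexOn_add
  · -- F₁
    apply myConvexOn_sum hS
    intro i _
    apply myConvexOn_add
    · exact myConvexOn_const_mul _ (hy i) (myConvexOn_linear hS (hlin1 (φ i)))
    · exact myConvexOn_const_mul _ (hη i).le (myConvexOn_exp_linear hS (hlinE i))
  · -- F₂
    apply myConvexOn_const_mul _ (by norm_num : (0:ℝ) ≤ 1/2)
    apply myConvexOn_sum hS
    intro k _
    exact myConvexOn_const_mul _ (inv_nonneg.mpr (hγ k).le)
      (myConvexOn_sq_linear hS (hlin1 (ψ k)))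
  · -- F₃
    apply myConvexOn_add
    · -- linear part minus log part
      have hsub : (fun mv : (Fin p → ℝ) × (Fin p → ℝ) =>
          (1 / 2) * ∑ k, ∑ j, (γ k)⁻¹ * (ψ k j) ^ 2 * mv.2 j
            - (1 / 2) * ∑ j, Real.log (mv.2 j))
          = (fun mv : (Fin p → ℝ) × (Fin p → ℝ) =>
          (1 / 2) * ∑ k, ∑ j, (γ k)⁻¹ * (ψ k j) ^ 2 * mv.2 j
            + (1 / 2) * ∑ j, -Real.log (mv.2 j)) := by
        funext mv
        rw [Finset.sum_neg_distrib]
        ring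
      rw [hsub]
      apply myConvexOn_add
      · apply myConvexOn_const_mul _ (by norm_num : (0:ℝ) ≤ 1/2)
        apply myConvexOn_sum hS
        intro k _
        exact myConvexOn_linear hS (hlin2 (fun j => (γ k)⁻¹ * (ψ k j) ^ 2))
      · apply myConvexOn_const_mul _ (by norm_num : (0:ℝ) ≤ 1/2)
        apply myConvexOn_sum hS
        intro j _
        have hlog : ConvexOn ℝ (Set.Ioi (0:ℝ)) (-Real.log) :=
          strictConcaveOn_log_Ioi.concaveOn.neg
        have hproj := hlog.comp_linearMap
          ((LinearMap.proj j).comp (LinearMap.snd ℝ (Fin p → ℝ) (Fin p → ℝ)))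
        exact hproj.subset (fun mv hmv => hmv j) hS
    · exact convexOn_const _ hS
end

section
/- Let F₁(m,v) = ∑_i [y_i ∑_j φ_{ij} m_j + η_i exp(−∑_j φ_{ij} m_j + ∑_j φ_{ij}² v_j/2)] with y_i, η_i, φ_{ij} ≥ 0, and define μ_i^{(t)} = η_i exp(−∑_j φ_{ij} m_j^{(t)} + ∑_j φ_{ij}² v_j^{(t)}/2), b_j^y = ∑_i φ_{ij} y_i, b_j^{(t)} = ∑_i φ_{ij} μ_i^{(t)}, b̃_j^{(t)} = ∑_i φ_{ij}² μ_i^{(t)}/2, and Z₁ = max_i ∑_j (φ_{ij} + φ_{ij}²/2) > 0. Then for all (m, v), F₁(m,v) ≤ ∑_i μ_i^{(t)} r_{i0} + ∑_j [b_j^y m_j + (b_j^{(t)}/Z₁) exp(−Z₁(m_j − m_j^{(t)})) + (b̃_j^{(t)}/Z₁) exp(Z₁(v_j − v_j^{(t)}))] where the first sum is a constant independent of (m,v), with equality when m = m^{(t)} and v = v^{(t)}. -/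
open Finset

lemma jensen_exp' {ι : Type*} [Fintype ι] (w x : ι → ℝ) (hw : ∀ j, 0 ≤ w j)
    (hs : ∑ j, w j ≤ 1) :
    Real.exp (∑ j, w j * x j) ≤ (1 - ∑ j, w j) + ∑ j, w j * Real.exp (x j) := by
  have h := convexOn_exp.map_sum_le (t := (Finset.univ : Finset (Option ι)))
    (w := fun o => Option.elim o (1 - ∑ j, w j) w)
    (p := fun o => Option.elim o 0 x)
    (by rintro (_|j) _
        · simpa using hs
        · exact hw j)
    (by rw [Fintype.sum_option]; simp)
    (by intro i _; trivial)
  simpa [Fintype.sum_option, Real.exp_zero, smul_eq_mul] using h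

-- per-i bound
lemma key_bound {n p : ℕ} (i : Fin n) (η : Fin n → ℝ) (φ : Fin n → Fin p → ℝ)
    (hη : 0 < η i) (hφ : ∀ j, 0 ≤ φ i j)
    (mt vt : Fin p → ℝ) (Z₁ : ℝ) (hZpos : 0 < Z₁)
    (hZge : ∑ j, (φ i j + (φ i j) ^ 2 / 2) ≤ Z₁)
    (μi : ℝ)
    (hμ : μi = η i * Real.exp (-(∑ j, φ i j * mt j) + (∑ j, (φ i j) ^ 2 * vt j) / 2))
    (m v : Fin p → ℝ) :
    η i * Real.exp (-(∑ j, φ i j * m j) + (∑ j, (φ i j) ^ 2 * v j) / 2)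
      ≤ μi * (1 - ∑ j, (φ i j + (φ i j) ^ 2 / 2) / Z₁)
        + ∑ j, ((φ i j * μi / Z₁) * Real.exp (-Z₁ * (m j - mt j))
            + ((φ i j) ^ 2 * μi / (2 * Z₁)) * Real.exp (Z₁ * (v j - vt j))) := by
  set w : Fin p ⊕ Fin p → ℝ := Sum.elim (fun j => φ i j / Z₁) (fun j => (φ i j) ^ 2 / (2 * Z₁))
    with hw
  set x : Fin p ⊕ Fin p → ℝ := Sum.elim (fun j => -Z₁ * (m j - mt j)) (fun j => Z₁ * (v j - vt j))
    with hx
  have hwpos : ∀ k, 0 ≤ w k := by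
    rintro (j|j)
    · exact div_nonneg (hφ j) hZpos.le
    · exact div_nonneg (pow_nonneg (hφ j) 2) (by positivity)
  have hwsum : ∑ k, w k = (∑ j, (φ i j + (φ i j) ^ 2 / 2)) / Z₁ := by
    rw [Fintype.sum_sum_type]
    simp only [hw, Sum.elim_inl, Sum.elim_inr]
    rw [Finset.sum_div]
    rw [← Finset.sum_add_distrib]
    apply Finset.sum_congr rfl
    intro j _
    field_simp
  have hwle : ∑ k, w k ≤ 1 := by
    rw [hwsum]
    exact div_le_one_of_le₀ hZge hZpos.le
  have hwx : ∑ k, w k * x k =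
      (-(∑ j, φ i j * m j) + (∑ j, (φ i j) ^ 2 * v j) / 2)
      - (-(∑ j, φ i j * mt j) + (∑ j, (φ i j) ^ 2 * vt j) / 2) := by
    rw [Fintype.sum_sum_type]
    simp only [hw, hx, Sum.elim_inl, Sum.elim_inr]
    have h1 : ∀ j ∈ Finset.univ, φ i j / Z₁ * (-Z₁ * (m j - mt j)) =
        -(φ i j * m j) + φ i j * mt j := by
      intro j _; field_simp; ring
    have h2 : ∀ j ∈ Finset.univ, (φ i j) ^ 2 / (2 * Z₁) * (Z₁ * (v j - vt j)) =
        (φ i j) ^ 2 * v j / 2 - (φ i j) ^ 2 * vt j / 2 := by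
      intro j _; field_simp
    rw [Finset.sum_congr rfl h1, Finset.sum_congr rfl h2, Finset.sum_add_distrib,
      Finset.sum_sub_distrib, Finset.sum_neg_distrib, ← Finset.sum_div, ← Finset.sum_div]
    ring
  have hμpos : 0 < μi := by rw [hμ]; positivity
  have hj := jensen_exp' w x hwpos hwle
  have hexp : η i * Real.exp (-(∑ j, φ i j * m j) + (∑ j, (φ i j) ^ 2 * v j) / 2)
      = μi * Real.exp (∑ k, w k * x k) := by
    rw [hwx, hμ, mul_assoc, ← Real.exp_add]
    ring_nf
  rw [hexp]
  calc μi * Real.exp (∑ k, w k * x k)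
      ≤ μi * ((1 - ∑ k, w k) + ∑ k, w k * Real.exp (x k)) := by
        exact mul_le_mul_of_nonneg_left hj hμpos.le
    _ = μi * (1 - ∑ j, (φ i j + (φ i j) ^ 2 / 2) / Z₁)
        + ∑ j, ((φ i j * μi / Z₁) * Real.exp (-Z₁ * (m j - mt j))
            + ((φ i j) ^ 2 * μi / (2 * Z₁)) * Real.exp (Z₁ * (v j - vt j))) := by
        rw [hwsum, Fintype.sum_sum_type]
        simp only [hw, hx, Sum.elim_inl, Sum.elim_inr]
        have e1 : ∑ j, (φ i j + (φ i j) ^ 2 / 2) / Z₁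
            = (∑ j, (φ i j + (φ i j) ^ 2 / 2)) / Z₁ := (Finset.sum_div _ _ _).symm
        have e2 : ∑ j, ((φ i j * μi / Z₁) * Real.exp (-Z₁ * (m j - mt j))
              + ((φ i j) ^ 2 * μi / (2 * Z₁)) * Real.exp (Z₁ * (v j - vt j)))
            = μi * (∑ j, φ i j / Z₁ * Real.exp (-Z₁ * (m j - mt j)))
              + μi * (∑ j, (φ i j) ^ 2 / (2 * Z₁) * Real.exp (Z₁ * (v j - vt j))) := by
          rw [Finset.mul_sum, Finset.mul_sum, ← Finset.sum_add_distrib]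
          apply Finset.sum_congr rfl
          intro j _
          ring
        rw [e1, e2]
        ring

/-- Separable surrogate for the expected negative Poisson log-likelihood `F₁`:
`F₁(m,v) ≤ const + ∑ j, [bʸ j * m j + (b j / Z₁) exp(−Z₁(m j − mᵗ j)) +
(b̃ j / Z₁) exp(Z₁(v j − vᵗ j))]`, with equality at `(m, v) = (mᵗ, vᵗ)`. -/
theorem F1_separable_surrogate {n p : ℕ}
    (hne : (Finset.univ : Finset (Fin n)).Nonempty)
    (y η : Fin n → ℝ) (φ : Fin n → Fin p → ℝ)
    (hy : ∀ i, 0 ≤ y i) (hη : ∀ i, 0 < η i) (hφ : ∀ i j, 0 ≤ φ i j)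
    (mt vt : Fin p → ℝ) (Z₁ : ℝ)
    (hZ : Z₁ = Finset.univ.sup' hne (fun i => ∑ j, (φ i j + (φ i j) ^ 2 / 2)))
    (hZpos : 0 < Z₁)
    (μ : Fin n → ℝ)
    (hμ : ∀ i, μ i = η i * Real.exp (-(∑ j, φ i j * mt j) + (∑ j, (φ i j) ^ 2 * vt j) / 2))
    (by' b bt : Fin p → ℝ)
    (hby : ∀ j, by' j = ∑ i, φ i j * y i)
    (hb : ∀ j, b j = ∑ i, φ i j * μ i)
    (hbt : ∀ j, bt j = ∑ i, (φ i j) ^ 2 * μ i / 2) :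
    (∀ m v : Fin p → ℝ,
      ∑ i, (y i * ∑ j, φ i j * m j +
          η i * Real.exp (-(∑ j, φ i j * m j) + (∑ j, (φ i j) ^ 2 * v j) / 2))
        ≤ (∑ i, μ i * (1 - ∑ j, (φ i j + (φ i j) ^ 2 / 2) / Z₁)) +
          ∑ j, (by' j * m j + (b j / Z₁) * Real.exp (-Z₁ * (m j - mt j)) +
            (bt j / Z₁) * Real.exp (Z₁ * (v j - vt j)))) ∧
    (∑ i, (y i * ∑ j, φ i j * mt j +
        η i * Real.exp (-(∑ j, φ i j * mt j) + (∑ j, (φ i j) ^ 2 * vt j) / 2))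
      = (∑ i, μ i * (1 - ∑ j, (φ i j + (φ i j) ^ 2 / 2) / Z₁)) +
        ∑ j, (by' j * mt j + (b j / Z₁) * Real.exp (-Z₁ * (mt j - mt j)) +
          (bt j / Z₁) * Real.exp (Z₁ * (vt j - vt j)))) := by
  have hZge : ∀ i, ∑ j, (φ i j + (φ i j) ^ 2 / 2) ≤ Z₁ := by
    intro i; rw [hZ]; exact Finset.le_sup' (fun i => ∑ j, (φ i j + (φ i j) ^ 2 / 2)) (Finset.mem_univ i)
  have hswap : ∀ (m e₁ e₂ : Fin p → ℝ),
      ∑ j, (by' j * m j + (b j / Z₁) * e₁ j + (bt j / Z₁) * e₂ j)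
      = (∑ i, y i * ∑ j, φ i j * m j)
        + ∑ i, ∑ j, ((φ i j * μ i / Z₁) * e₁ j
            + ((φ i j) ^ 2 * μ i / (2 * Z₁)) * e₂ j) := by
    intro m e₁ e₂
    calc ∑ j, (by' j * m j + (b j / Z₁) * e₁ j + (bt j / Z₁) * e₂ j)
        = ∑ j, ∑ i, (φ i j * y i * m j + (φ i j * μ i / Z₁) * e₁ j
            + ((φ i j) ^ 2 * μ i / (2 * Z₁)) * e₂ j) := by
          apply Finset.sum_congr rfl
          intro j _
          rw [hby, hb, hbt, Finset.sum_mul, Finset.sum_div, Finset.sum_mul,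
            Finset.sum_div, Finset.sum_mul, ← Finset.sum_add_distrib,
            ← Finset.sum_add_distrib]
          apply Finset.sum_congr rfl
          intro i _
          ring
      _ = ∑ i, ∑ j, (φ i j * y i * m j + (φ i j * μ i / Z₁) * e₁ j
            + ((φ i j) ^ 2 * μ i / (2 * Z₁)) * e₂ j) := Finset.sum_comm
      _ = (∑ i, y i * ∑ j, φ i j * m j)
          + ∑ i, ∑ j, ((φ i j * μ i / Z₁) * e₁ j
              + ((φ i j) ^ 2 * μ i / (2 * Z₁)) * e₂ j) := by
          rw [← Finset.sum_add_distrib]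
          apply Finset.sum_congr rfl
          intro i _
          rw [Finset.mul_sum, ← Finset.sum_add_distrib]
          apply Finset.sum_congr rfl
          intro j _
          ring
  constructor
  · intro m v
    rw [hswap m (fun j => Real.exp (-Z₁ * (m j - mt j)))
      (fun j => Real.exp (Z₁ * (v j - vt j))), Finset.sum_add_distrib]
    have h := Finset.sum_le_sum (s := Finset.univ)
      (fun i _ => key_bound i η φ (hη i) (fun j => hφ i j) mt vt Z₁ hZpos (hZge i)
        (μ i) (hμ i) m v)
    rw [Finset.sum_add_distrib] at h
    linarith
  · have hs := hswap mt (fun _ => (1 : ℝ)) (fun _ => (1 : ℝ))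
    simp only [mul_one] at hs
    simp only [sub_self, mul_zero, Real.exp_zero, mul_one]
    rw [hs, Finset.sum_add_distrib]
    have hper : ∀ i, μ i * (1 - ∑ j, (φ i j + (φ i j) ^ 2 / 2) / Z₁)
        + ∑ j, ((φ i j * μ i / Z₁) + ((φ i j) ^ 2 * μ i / (2 * Z₁)))
        = η i * Real.exp (-(∑ j, φ i j * mt j) + (∑ j, (φ i j) ^ 2 * vt j) / 2) := by
      intro i
      have h2 : ∑ j, ((φ i j * μ i / Z₁) + ((φ i j) ^ 2 * μ i / (2 * Z₁)))
          = μ i * ∑ j, (φ i j + (φ i j) ^ 2 / 2) / Z₁ := by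
        rw [Finset.mul_sum]
        apply Finset.sum_congr rfl
        intro j _
        field_simp
      rw [h2, ← hμ i]
      ring
    have h3 : (∑ i, μ i * (1 - ∑ j, (φ i j + (φ i j) ^ 2 / 2) / Z₁))
        + ∑ i, ∑ j, ((φ i j * μ i / Z₁) + ((φ i j) ^ 2 * μ i / (2 * Z₁)))
        = ∑ i, η i * Real.exp (-(∑ j, φ i j * mt j) + (∑ j, (φ i j) ^ 2 * vt j) / 2) := by
      rw [← Finset.sum_add_distrib]
      exact Finset.sum_congr rfl (fun i _ => hper i)
    linarith
end

section
/- Let Ψ = (ψ_{kj}) ∈ ℝ^{p×p}, γ^{(t)} ∈ ℝ_{>0}^p, m^{(t)} ∈ ℝ^p, and define d_k^{(t)} = ∑_j ψ_{kj} m_j^{(t)}, f_j^{(t)} = ∑_k ψ_{kj} d_k^{(t)}/γ_k^{(t)}, g_j^{(t)} = Z₂ ∑_k |ψ_{kj}|/(2γ_k^{(t)}), Z₂ = max_k ∑_j |ψ_{kj}| > 0, and h^{(t)} = ∑_k (d_k^{(t)})²/(2γ_k^{(t)}). Then for all m ∈ ℝ^p, (1/2)∑_k γ_k^{(t)-1}(∑_j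 ψ_{kj} m_j)² ≤ h^{(t)} + ∑_j [f_j^{(t)}(m_j − m_j^{(t)}) + g_j^{(t)}(m_j − m_j^{(t)})²], with equality at m = m^{(t)}. -/
open Finset

/-- Separable quadratic surrogate for the weighted quadratic penalty:
`(1/2)∑ k, (∑ j, ψ k j * m j)² / γ k ≤ h + ∑ j, [f j (m j − mᵗ j) + g j (m j − mᵗ j)²]`,
with equality at `m = mᵗ`. -/
theorem F2_separable_surrogate {p : ℕ}
    (hne : (Finset.univ : Finset (Fin p)).Nonempty)
    (ψ : Fin p → Fin p → ℝ) (γ : Fin p → ℝ) (hγ : ∀ k, 0 < γ k)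
    (mt : Fin p → ℝ) (d f g : Fin p → ℝ) (h Z₂ : ℝ)
    (hZ : Z₂ = Finset.univ.sup' hne (fun k => ∑ j, |ψ k j|)) (hZpos : 0 < Z₂)
    (hd : ∀ k, d k = ∑ j, ψ k j * mt j)
    (hf : ∀ j, f j = ∑ k, ψ k j * d k / γ k)
    (hg : ∀ j, g j = Z₂ * ∑ k, |ψ k j| / (2 * γ k))
    (hh : h = ∑ k, (d k) ^ 2 / (2 * γ k)) :
    (∀ m : Fin p → ℝ,
      (1 / 2) * ∑ k, (γ k)⁻¹ * (∑ j, ψ k j * m j) ^ 2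
        ≤ h + ∑ j, (f j * (m j - mt j) + g j * (m j - mt j) ^ 2)) ∧
    (1 / 2) * ∑ k, (γ k)⁻¹ * (∑ j, ψ k j * mt j) ^ 2
      = h + ∑ j, (f j * (mt j - mt j) + g j * (mt j - mt j) ^ 2) := by
  have hγ0 : ∀ k, (γ k) ≠ 0 := fun k => (hγ k).ne'
  constructor
  · intro m
    set δ : Fin p → ℝ := fun j => m j - mt j with hδ
    set S : Fin p → ℝ := fun k => ∑ j, ψ k j * δ j with hS
    set T : Fin p → ℝ := fun k => ∑ j, |ψ k j| * δ j ^ 2 with hT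
    have hsum : ∀ k, (∑ j, ψ k j * m j) = d k + S k := by
      intro k
      rw [hd, hS, ← Finset.sum_add_distrib]
      refine Finset.sum_congr rfl fun j _ => ?_
      simp only [hδ]; ring
    have hTnn : ∀ k, 0 ≤ T k := fun k => Finset.sum_nonneg fun j _ => by positivity
    have key : ∀ k, (S k) ^ 2 ≤ Z₂ * T k := by
      intro k
      have h1 : (S k) ^ 2 ≤ (∑ j, |ψ k j| * |δ j|) ^ 2 := by
        rw [← sq_abs]
        have habs : |S k| ≤ ∑ j, |ψ k j| * |δ j| := by
          refine (Finset.abs_sum_le_sum_abs _ _).trans (le_of_eq ?_)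
          exact Finset.sum_congr rfl fun j _ => abs_mul _ _
        exact pow_le_pow_left₀ (abs_nonneg _) habs 2
      have h2 : (∑ j, |ψ k j| * |δ j|) ^ 2 ≤ (∑ j, |ψ k j|) * T k := by
        refine Finset.sum_sq_le_sum_mul_sum_of_sq_eq_mul _
          (fun j _ => abs_nonneg _) (fun j _ => by positivity) (fun j _ => ?_)
        rw [mul_pow, sq_abs (δ j)]; ring
      have h3 : (∑ j, |ψ k j|) * T k ≤ Z₂ * T k := by
        apply mul_le_mul_of_nonneg_right _ (hTnn k)
        rw [hZ]
        exact Finset.le_sup' (fun k => ∑ j, |ψ k j|) (Finset.mem_univ k)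
      exact h1.trans (h2.trans h3)
    have hLHS : (1 / 2) * ∑ k, (γ k)⁻¹ * (∑ j, ψ k j * m j) ^ 2
        = ∑ k, ((d k) ^ 2 / (2 * γ k) + d k * S k / γ k + (S k) ^ 2 / (2 * γ k)) := by
      rw [Finset.mul_sum]
      refine Finset.sum_congr rfl fun k _ => ?_
      rw [hsum k]
      field_simp
      ring
    have hRHS : h + ∑ j, (f j * δ j + g j * δ j ^ 2)
        = ∑ k, ((d k) ^ 2 / (2 * γ k) + d k * S k / γ k + Z₂ * T k / (2 * γ k)) := by
      have e1 : ∑ j, f j * δ j = ∑ k, d k * S k / γ k := by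
        simp_rw [hf, Finset.sum_mul]
        rw [Finset.sum_comm]
        refine Finset.sum_congr rfl fun k _ => ?_
        rw [hS, Finset.mul_sum, Finset.sum_div]
        refine Finset.sum_congr rfl fun j _ => by ring
      have e2 : ∑ j, g j * δ j ^ 2 = ∑ k, Z₂ * T k / (2 * γ k) := by
        simp_rw [hg, Finset.mul_sum, Finset.sum_mul]
        rw [Finset.sum_comm]
        refine Finset.sum_congr rfl fun k _ => ?_
        simp only [hT, Finset.mul_sum, Finset.sum_div]
        exact Finset.sum_congr rfl fun j _ => by ring
      rw [Finset.sum_add_distrib, e1, e2, hh, ← Finset.sum_add_distrib,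
        ← Finset.sum_add_distrib]
      exact Finset.sum_congr rfl fun k _ => by ring
    rw [hLHS, hRHS]
    refine Finset.sum_le_sum fun k _ => ?_
    have := key k
    have hγk := hγ k
    gcongr
  · simp only [sub_self, mul_zero, ne_eq, OfNat.ofNat_ne_zero, not_false_eq_true,
      zero_pow, add_zero, Finset.sum_const_zero]
    rw [hh, Finset.mul_sum]
    refine Finset.sum_congr rfl fun k _ => ?_
    rw [← hd]
    field_simp
end

section
/- Let g : ℝ_{>0}^p → ℝ be defined by g(m,v,γ) ↦ F(m,v,γ) = F₁(m,v) + F₂(m,γ) + F₃(v,γ) as in the VARD objective with y_i ≥ 0, η_i > 0, φ_{ij} ≥ 0 with every column of Φ nonzero, and Ψ square invertible. Then F is coercive on the feasible set {m ⪰ 0, v ≻ 0, γ ≻ 0}: along any sequence with ‖(m,v,γ)‖ → ∞ inside the feasible set, F → ∞. Consequently every sublevel set {z feasible : F(z) ≤ c} is bounded. -/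
open Finset Filter Matrix

private lemma vard_log_lb {b g : ℝ} (hb : 0 < b) (hg : 0 < g) :
    1 + Real.log b ≤ b / g + Real.log g := by
  have h := Real.log_le_sub_one_of_pos (div_pos hb hg)
  rw [Real.log_div hb.ne' hg.ne'] at h
  linarith

private lemma vard_exists_perm {p : ℕ} (ψ : Matrix (Fin p) (Fin p) ℝ)
    (h : ψ.det ≠ 0) : ∃ τ : Equiv.Perm (Fin p), ∀ k, ψ k (τ k) ≠ 0 := by
  by_contra hc
  push_neg at hc
  apply h
  rw [Matrix.det_apply]
  refine Finset.sum_eq_zero fun σ _ => ?_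
  obtain ⟨k, hk⟩ := hc σ⁻¹
  have : ∏ i, ψ (σ i) i = 0 :=
    Finset.prod_eq_zero (Finset.mem_univ ((σ⁻¹ : Equiv.Perm (Fin p)) k))
      (by simpa using hk)
  rw [this, smul_zero]

set_option maxHeartbeats 1000000 in
/-- Coercivity of the VARD objective `F = F₁ + F₂ + F₃` on the feasible set
`{m ⪰ 0, v ≻ 0, γ ≻ 0}`: along any feasible sequence whose norm tends to
infinity, `F` tends to infinity; consequently every feasible sublevel set is
bounded. -/
theorem vard_objective_coercive {n p : ℕ} (y η : Fin n → ℝ)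
    (φ : Fin n → Fin p → ℝ) (ψ : Matrix (Fin p) (Fin p) ℝ)
    (hy : ∀ i, 0 ≤ y i) (hη : ∀ i, 0 < η i) (hφ : ∀ i j, 0 ≤ φ i j)
    (hcol : ∀ j, ∃ i, φ i j ≠ 0) (hψ : IsUnit ψ.det) :
    let F : (Fin p → ℝ) × (Fin p → ℝ) × (Fin p → ℝ) → ℝ := fun z =>
      (∑ i, (y i * ∑ j, φ i j * z.1 j +
        η i * Real.exp (-(∑ j, φ i j * z.1 j) + (∑ j, (φ i j) ^ 2 * z.2.1 j) / 2)))
      + (1 / 2) * ∑ k, (∑ j, ψ k j * z.1 j) ^ 2 / z.2.2 k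
      + (1 / 2) * ∑ k, ∑ j, (ψ k j) ^ 2 * z.2.1 j / z.2.2 k
      - (1 / 2) * ∑ j, Real.log (z.2.1 j)
      + (1 / 2) * ∑ k, Real.log (z.2.2 k)
    let feas : Set ((Fin p → ℝ) × (Fin p → ℝ) × (Fin p → ℝ)) :=
      {z | (∀ j, 0 ≤ z.1 j) ∧ (∀ j, 0 < z.2.1 j) ∧ (∀ k, 0 < z.2.2 k)}
    (∀ z : ℕ → (Fin p → ℝ) × (Fin p → ℝ) × (Fin p → ℝ),
      (∀ t, z t ∈ feas) →
      Tendsto (fun t => ‖z t‖) atTop atTop →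
      Tendsto (fun t => F (z t)) atTop atTop) ∧
    (∀ c : ℝ, Bornology.IsBounded {z ∈ feas | F z ≤ c}) := by
  intro F feas
  obtain ⟨τ, hτ⟩ := vard_exists_perm ψ hψ.ne_zero
  choose idx hidx using hcol
  have key : ∀ c : ℝ, ∃ R : ℝ, 0 ≤ R ∧ ∀ z ∈ feas, F z ≤ c → ‖z‖ ≤ R := by
    intro c
    rcases Nat.eq_zero_or_pos p with hp | hp
    · subst hp
      refine ⟨0, le_refl 0, fun z _ _ => ?_⟩
      have h1 : z = 0 := Subsingleton.elim z 0
      rw [h1, norm_zero]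
    · -- main case: p > 0
      have hj0 : Fin p := ⟨0, hp⟩
      set C1 : ℝ := (1 / 2) * ∑ k, (1 + Real.log ((ψ k (τ k)) ^ 2)) with hC1def
      set c₁ : ℝ := c - C1 with hc₁def
      set K : ℝ := Real.exp (1 + 2 * c₁) with hKdef
      set Sψ2 : ℝ := ∑ k, ∑ j, (ψ k j) ^ 2 with hSψ2def
      set Sinv : ℝ := ∑ j, ∑ k, |ψ⁻¹ j k| with hSinvdef
      set aS : ℝ := ∑ j, 2 * (∑ j', φ (idx j) j') / (φ (idx j) j) ^ 2 with haSdef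
      set bS : ℝ := ∑ j, 2 * max 0 (Real.log (c₁ / η (idx j))) / (φ (idx j) j) ^ 2 with hbSdef
      set D0 : ℝ := Sinv ^ 2 * (2 * c₁) * K * Sψ2 with hD0def
      set RM : ℝ := max 1 (D0 * aS + D0 * bS) with hRMdef
      set RV : ℝ := aS * RM + bS with hRVdef
      set RG : ℝ := K * Sψ2 * RV with hRGdef
      have hRM1 : (1 : ℝ) ≤ RM := by rw [hRMdef]; exact le_max_left _ _
      have hRtot0 : (0 : ℝ) ≤ max RM (max RV RG) :=
        le_trans zero_le_one (le_trans hRM1 (le_max_left _ _))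
      refine ⟨max RM (max RV RG), hRtot0, ?_⟩
      rintro ⟨m, v, g⟩ hfz hFc
      obtain ⟨hm, hvp, hgp⟩ := hfz
      dsimp only at hm hvp hgp
      have hFeq : F (m, v, g) =
          (∑ i, (y i * ∑ j, φ i j * m j +
            η i * Real.exp (-(∑ j, φ i j * m j) + (∑ j, (φ i j) ^ 2 * v j) / 2)))
          + (1 / 2) * ∑ k, (∑ j, ψ k j * m j) ^ 2 / g k
          + (1 / 2) * ∑ k, ∑ j, (ψ k j) ^ 2 * v j / g k
          - (1 / 2) * ∑ j, Real.log (v j)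
          + (1 / 2) * ∑ k, Real.log (g k) := rfl
      rw [hFeq] at hFc
      rw [Finset.sum_add_distrib] at hFc
      have hdiv : ∀ k, ∑ j, (ψ k j) ^ 2 * v j / g k = (∑ j, (ψ k j) ^ 2 * v j) / g k :=
        fun k => (Finset.sum_div _ _ _).symm
      rw [Finset.sum_congr rfl fun k _ => hdiv k] at hFc
      -- basic positivity facts
      have hBpos : ∀ k, 0 < ∑ j, (ψ k j) ^ 2 * v j := fun k =>
        Finset.sum_pos' (fun j _ => mul_nonneg (sq_nonneg _) (hvp j).le)
          ⟨τ k, Finset.mem_univ _, mul_pos (pow_two_pos_of_ne_zero (hτ k)) (hvp (τ k))⟩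
      have hDpos : ∀ k, 0 ≤ (∑ j, (ψ k j) ^ 2 * v j) / g k + Real.log (g k) - 1
          - Real.log (∑ j, (ψ k j) ^ 2 * v j) := fun k => by
        have := vard_log_lb (hBpos k) (hgp k); linarith
      have hA : 0 ≤ ∑ i, y i * ∑ j, φ i j * m j :=
        Finset.sum_nonneg fun i _ => mul_nonneg (hy i)
          (Finset.sum_nonneg fun j _ => mul_nonneg (hφ i j) (hm j))
      have e2 : ∑ k, ((∑ j, (ψ k j) ^ 2 * v j) / g k + Real.log (g k) - 1
            - Real.log (∑ j, (ψ k j) ^ 2 * v j))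
          = ∑ k, (∑ j, (ψ k j) ^ 2 * v j) / g k + ∑ k, Real.log (g k)
            - ∑ _k : Fin p, (1 : ℝ) - ∑ k, Real.log (∑ j, (ψ k j) ^ 2 * v j) := by
        simp only [Finset.sum_add_distrib, Finset.sum_sub_distrib]
      have e3 : (1 / 2) * ∑ k, (1 + Real.log ((ψ k (τ k)) ^ 2))
          ≤ (1 / 2) * (∑ _k : Fin p, (1 : ℝ) + ∑ k, Real.log (∑ j, (ψ k j) ^ 2 * v j))
            - (1 / 2) * ∑ j, Real.log (v j) := by
        have h1 : ∀ k, 1 + Real.log ((ψ k (τ k)) ^ 2) + Real.log (v (τ k))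
            ≤ 1 + Real.log (∑ j, (ψ k j) ^ 2 * v j) := by
          intro k
          have hle : (ψ k (τ k)) ^ 2 * v (τ k) ≤ ∑ j, (ψ k j) ^ 2 * v j :=
            Finset.single_le_sum (fun j _ => mul_nonneg (sq_nonneg _) (hvp j).le)
              (Finset.mem_univ (τ k))
          have h2 := Real.log_le_log
            (mul_pos (pow_two_pos_of_ne_zero (hτ k)) (hvp (τ k))) hle
          rw [Real.log_mul (pow_ne_zero 2 (hτ k)) (hvp (τ k)).ne'] at h2
          linarith
        have h2 := Finset.sum_le_sum fun k (_ : k ∈ Finset.univ) => h1 k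
        simp only [Finset.sum_add_distrib] at h2
        have h3 : ∑ k, Real.log (v (τ k)) = ∑ j, Real.log (v j) :=
          Equiv.sum_comp τ fun j => Real.log (v j)
        rw [h3] at h2
        simp only [Finset.sum_add_distrib]
        linarith
      have master : (∑ i, η i * Real.exp (-(∑ j, φ i j * m j) + (∑ j, (φ i j) ^ 2 * v j) / 2))
          + (1 / 2) * ∑ k, (∑ j, ψ k j * m j) ^ 2 / g k
          + (1 / 2) * ∑ k, ((∑ j, (ψ k j) ^ 2 * v j) / g k + Real.log (g k) - 1
            - Real.log (∑ j, (ψ k j) ^ 2 * v j))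
          + (1 / 2) * ∑ k, (1 + Real.log ((ψ k (τ k)) ^ 2)) ≤ c := by
        linarith [hFc, e2, e3, hA]
      -- component consequences
      have hE0 : ∀ i, 0 < η i * Real.exp (-(∑ j, φ i j * m j) + (∑ j, (φ i j) ^ 2 * v j) / 2) :=
        fun i => mul_pos (hη i) (Real.exp_pos _)
      have hEsumpos : 0 ≤ ∑ i, η i * Real.exp (-(∑ j, φ i j * m j) + (∑ j, (φ i j) ^ 2 * v j) / 2) :=
        Finset.sum_nonneg fun i _ => (hE0 i).le
      have hQ0 : 0 ≤ ∑ k, (∑ j, ψ k j * m j) ^ 2 / g k :=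
        Finset.sum_nonneg fun k _ => div_nonneg (sq_nonneg _) (hgp k).le
      have hDsum0 : 0 ≤ ∑ k, ((∑ j, (ψ k j) ^ 2 * v j) / g k + Real.log (g k) - 1
          - Real.log (∑ j, (ψ k j) ^ 2 * v j)) :=
        Finset.sum_nonneg fun k _ => hDpos k
      have hEsum_le : ∑ i, η i * Real.exp (-(∑ j, φ i j * m j) + (∑ j, (φ i j) ^ 2 * v j) / 2) ≤ c₁ := by
        rw [hc₁def, hC1def]; linarith [master, hQ0, hDsum0]
      have hterm : ∀ i, η i * Real.exp (-(∑ j, φ i j * m j) + (∑ j, (φ i j) ^ 2 * v j) / 2) ≤ c₁ :=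
        fun i => le_trans (Finset.single_le_sum (fun i _ => (hE0 i).le) (Finset.mem_univ i)) hEsum_le
      have hc1pos : 0 < c₁ := lt_of_lt_of_le (hE0 (idx hj0)) (hterm (idx hj0))
      have hQsum : ∑ k, (∑ j, ψ k j * m j) ^ 2 / g k ≤ 2 * c₁ := by
        rw [hc₁def, hC1def]; linarith [master, hEsumpos, hDsum0]
      have hQk : ∀ k, (∑ j, ψ k j * m j) ^ 2 ≤ 2 * c₁ * g k := by
        intro k
        have h1 : (∑ j, ψ k j * m j) ^ 2 / g k ≤ 2 * c₁ :=
          le_trans (Finset.single_le_sum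
            (f := fun k => (∑ j, ψ k j * m j) ^ 2 / g k)
            (fun k _ => div_nonneg (sq_nonneg _) (hgp k).le) (Finset.mem_univ k)) hQsum
        exact (div_le_iff₀ (hgp k)).mp h1
      have hDsumle : ∑ k, ((∑ j, (ψ k j) ^ 2 * v j) / g k + Real.log (g k) - 1
          - Real.log (∑ j, (ψ k j) ^ 2 * v j)) ≤ 2 * c₁ := by
        rw [hc₁def, hC1def]; linarith [master, hEsumpos, hQ0]
      have hgk : ∀ k, g k ≤ K * (∑ j, (ψ k j) ^ 2 * v j) := by
        intro k
        have hDk : (∑ j, (ψ k j) ^ 2 * v j) / g k + Real.log (g k) - 1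
            - Real.log (∑ j, (ψ k j) ^ 2 * v j) ≤ 2 * c₁ :=
          le_trans (Finset.single_le_sum
            (f := fun k => (∑ j, (ψ k j) ^ 2 * v j) / g k + Real.log (g k) - 1
              - Real.log (∑ j, (ψ k j) ^ 2 * v j))
            (fun k _ => hDpos k) (Finset.mem_univ k)) hDsumle
        have hb0 : 0 ≤ (∑ j, (ψ k j) ^ 2 * v j) / g k :=
          div_nonneg (hBpos k).le (hgp k).le
        have h1 : Real.log (g k) ≤ 1 + 2 * c₁ + Real.log (∑ j, (ψ k j) ^ 2 * v j) := by
          linarith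
        calc g k = Real.exp (Real.log (g k)) := (Real.exp_log (hgp k)).symm
          _ ≤ Real.exp (1 + 2 * c₁ + Real.log (∑ j, (ψ k j) ^ 2 * v j)) :=
              Real.exp_le_exp.mpr h1
          _ = K * (∑ j, (ψ k j) ^ 2 * v j) := by
              rw [Real.exp_add, Real.exp_log (hBpos k), hKdef]
      have hvj : ∀ j, v j ≤ 2 * (∑ j', φ (idx j) j') / (φ (idx j) j) ^ 2 * (∑ j', m j')
          + 2 * max 0 (Real.log (c₁ / η (idx j))) / (φ (idx j) j) ^ 2 := by
        intro j
        have h1 : Real.exp (-(∑ j', φ (idx j) j' * m j') + (∑ j', (φ (idx j) j') ^ 2 * v j') / 2)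
            ≤ c₁ / η (idx j) := by
          rw [le_div_iff₀ (hη (idx j))]
          have := hterm (idx j); linarith
        have h2 : -(∑ j', φ (idx j) j' * m j') + (∑ j', (φ (idx j) j') ^ 2 * v j') / 2
            ≤ Real.log (c₁ / η (idx j)) :=
          (Real.le_log_iff_exp_le (div_pos hc1pos (hη (idx j)))).mpr h1
        have h3 : (φ (idx j) j) ^ 2 * v j ≤ ∑ j', (φ (idx j) j') ^ 2 * v j' :=
          Finset.single_le_sum (f := fun j' => (φ (idx j) j') ^ 2 * v j')
            (fun j' _ => mul_nonneg (sq_nonneg _) (hvp j').le) (Finset.mem_univ j)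
        have h4 : ∑ j', φ (idx j) j' * m j' ≤ (∑ j', φ (idx j) j') * (∑ j', m j') := by
          rw [Finset.sum_mul]
          exact Finset.sum_le_sum fun j' _ => mul_le_mul_of_nonneg_left
            (Finset.single_le_sum (fun t _ => hm t) (Finset.mem_univ j')) (hφ (idx j) j')
        have h5 : (φ (idx j) j) ^ 2 * v j
            ≤ 2 * ((∑ j', φ (idx j) j') * (∑ j', m j')) + 2 * max 0 (Real.log (c₁ / η (idx j))) := by
          have := le_max_right 0 (Real.log (c₁ / η (idx j)))
          linarith
        have hφ2 : 0 < (φ (idx j) j) ^ 2 := pow_two_pos_of_ne_zero (hidx j)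
        rw [show 2 * (∑ j', φ (idx j) j') / (φ (idx j) j) ^ 2 * (∑ j', m j')
            + 2 * max 0 (Real.log (c₁ / η (idx j))) / (φ (idx j) j) ^ 2
            = (2 * ((∑ j', φ (idx j) j') * (∑ j', m j'))
              + 2 * max 0 (Real.log (c₁ / η (idx j)))) / (φ (idx j) j) ^ 2 by ring,
          le_div_iff₀ hφ2]
        linarith [h5]
      have hV : ∑ j, v j ≤ aS * (∑ j, m j) + bS := by
        rw [haSdef, hbSdef]
        have h1 := Finset.sum_le_sum fun j (_ : j ∈ Finset.univ) => hvj j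
        rw [Finset.sum_add_distrib, ← Finset.sum_mul] at h1
        exact h1
      have hKpos : 0 < K := by rw [hKdef]; exact Real.exp_pos _
      have hSψ2nn : 0 ≤ Sψ2 := by
        rw [hSψ2def]
        exact Finset.sum_nonneg fun k _ => Finset.sum_nonneg fun j _ => sq_nonneg _
      have hG : ∑ k, g k ≤ K * Sψ2 * (∑ j, v j) := by
        calc ∑ k, g k ≤ ∑ k, K * (∑ j, (ψ k j) ^ 2 * v j) :=
              Finset.sum_le_sum fun k _ => hgk k
          _ ≤ ∑ k, K * (∑ j, (ψ k j) ^ 2 * (∑ j', v j')) := by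
              refine Finset.sum_le_sum fun k _ => mul_le_mul_of_nonneg_left ?_ hKpos.le
              exact Finset.sum_le_sum fun j _ => mul_le_mul_of_nonneg_left
                (Finset.single_le_sum (fun t _ => (hvp t).le) (Finset.mem_univ j)) (sq_nonneg _)
          _ = K * Sψ2 * (∑ j, v j) := by
              simp only [← Finset.sum_mul]
              rw [← Finset.mul_sum, ← Finset.sum_mul, ← hSψ2def]
              ring
      have hmvec : ∀ j, m j = ∑ k, ψ⁻¹ j k * (∑ j', ψ k j' * m j') := by
        have h0 : ψ⁻¹.mulVec (ψ.mulVec m) = m := by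
          rw [Matrix.mulVec_mulVec, Matrix.nonsing_inv_mul ψ hψ, Matrix.one_mulVec]
        intro j
        conv_lhs => rw [← h0]
        simp [Matrix.mulVec, dotProduct]
      have hgsum0 : 0 ≤ ∑ k, g k := Finset.sum_nonneg fun k _ => (hgp k).le
      have h2c1g : 0 ≤ 2 * c₁ * (∑ k, g k) := mul_nonneg (by linarith) hgsum0
      have hak : ∀ k, |∑ j, ψ k j * m j| ≤ Real.sqrt (2 * c₁ * (∑ k', g k')) := by
        intro k
        have hgle : g k ≤ ∑ k', g k' :=
          Finset.single_le_sum (fun t _ => (hgp t).le) (Finset.mem_univ k)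
        have h1 : (∑ j, ψ k j * m j) ^ 2 ≤ 2 * c₁ * (∑ k', g k') := by
          have := hQk k
          nlinarith
        calc |∑ j, ψ k j * m j| = Real.sqrt ((∑ j, ψ k j * m j) ^ 2) :=
              (Real.sqrt_sq_eq_abs _).symm
          _ ≤ Real.sqrt (2 * c₁ * (∑ k', g k')) := Real.sqrt_le_sqrt h1
      have hMle : (∑ j, m j) ≤ Sinv * Real.sqrt (2 * c₁ * (∑ k', g k')) := by
        calc ∑ j, m j
            ≤ ∑ j, (∑ k, |ψ⁻¹ j k|) * Real.sqrt (2 * c₁ * (∑ k', g k')) := by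
              refine Finset.sum_le_sum fun j _ => ?_
              rw [hmvec j]
              calc ∑ k, ψ⁻¹ j k * (∑ j', ψ k j' * m j')
                  ≤ |∑ k, ψ⁻¹ j k * (∑ j', ψ k j' * m j')| := le_abs_self _
                _ ≤ ∑ k, |ψ⁻¹ j k * (∑ j', ψ k j' * m j')| := Finset.abs_sum_le_sum_abs _ _
                _ = ∑ k, |ψ⁻¹ j k| * |∑ j', ψ k j' * m j'| := by
                    simp only [abs_mul]
                _ ≤ ∑ k, |ψ⁻¹ j k| * Real.sqrt (2 * c₁ * (∑ k', g k')) :=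
                    Finset.sum_le_sum fun k _ =>
                      mul_le_mul_of_nonneg_left (hak k) (abs_nonneg _)
                _ = (∑ k, |ψ⁻¹ j k|) * Real.sqrt (2 * c₁ * (∑ k', g k')) :=
                    (Finset.sum_mul _ _ _).symm
          _ = Sinv * Real.sqrt (2 * c₁ * (∑ k', g k')) := by
              rw [← Finset.sum_mul, ← hSinvdef]
      have hM0 : 0 ≤ ∑ j, m j := Finset.sum_nonneg fun j _ => hm j
      have hM2 : (∑ j, m j) ^ 2 ≤ D0 * aS * (∑ j, m j) + D0 * bS := by
        have hsq : (∑ j, m j) ^ 2 ≤ Sinv ^ 2 * (2 * c₁ * (∑ k, g k)) := by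
          have h1 := pow_le_pow_left₀ hM0 hMle 2
          rw [mul_pow, Real.sq_sqrt h2c1g] at h1
          exact h1
        calc (∑ j, m j) ^ 2 ≤ Sinv ^ 2 * (2 * c₁ * (∑ k, g k)) := hsq
          _ ≤ Sinv ^ 2 * (2 * c₁ * (K * Sψ2 * (∑ j, v j))) := by
              refine mul_le_mul_of_nonneg_left ?_ (sq_nonneg Sinv)
              exact mul_le_mul_of_nonneg_left hG (by linarith)
          _ ≤ Sinv ^ 2 * (2 * c₁ * (K * Sψ2 * (aS * (∑ j, m j) + bS))) := by
              refine mul_le_mul_of_nonneg_left ?_ (sq_nonneg Sinv)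
              refine mul_le_mul_of_nonneg_left ?_ (by linarith)
              exact mul_le_mul_of_nonneg_left hV (mul_nonneg hKpos.le hSψ2nn)
          _ = D0 * aS * (∑ j, m j) + D0 * bS := by rw [hD0def]; ring
      have haS0 : 0 ≤ aS := by
        rw [haSdef]
        refine Finset.sum_nonneg fun j _ => div_nonneg ?_ (sq_nonneg _)
        have := Finset.sum_nonneg fun j' (_ : j' ∈ Finset.univ) => hφ (idx j) j'
        linarith
      have hbS0 : 0 ≤ bS := by
        rw [hbSdef]
        refine Finset.sum_nonneg fun j _ => div_nonneg ?_ (sq_nonneg _)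
        have := le_max_left (0:ℝ) (Real.log (c₁ / η (idx j)))
        linarith
      have hD00 : 0 ≤ D0 := by
        rw [hD0def]
        exact mul_nonneg (mul_nonneg (mul_nonneg (sq_nonneg _) (by linarith)) hKpos.le) hSψ2nn
      have hMfin : ∑ j, m j ≤ RM := by
        rw [hRMdef]
        rcases le_or_gt (∑ j, m j) 1 with h | h
        · exact le_trans h (le_max_left _ _)
        · refine le_trans ?_ (le_max_right _ _)
          have hP : 0 ≤ D0 * aS := mul_nonneg hD00 haS0
          have hQn : 0 ≤ D0 * bS := mul_nonneg hD00 hbS0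
          nlinarith [hM2]
      have hVR : ∑ j, v j ≤ RV := by
        rw [hRVdef]
        have h3 : aS * (∑ t, m t) ≤ aS * RM := mul_le_mul_of_nonneg_left hMfin haS0
        linarith [hV]
      have hGR : ∑ k, g k ≤ RG := by
        rw [hRGdef]
        have h3 : K * Sψ2 * (∑ j, v j) ≤ K * Sψ2 * RV :=
          mul_le_mul_of_nonneg_left hVR (mul_nonneg hKpos.le hSψ2nn)
        linarith [hG]
      -- final norm bound
      have hmj : ∀ j, m j ≤ RM := fun j =>
        le_trans (Finset.single_le_sum (fun t _ => hm t) (Finset.mem_univ j)) hMfin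
      have hvjf : ∀ j, v j ≤ RV := fun j =>
        le_trans (Finset.single_le_sum (fun t _ => (hvp t).le) (Finset.mem_univ j)) hVR
      have hgkf : ∀ k, g k ≤ RG := fun k =>
        le_trans (Finset.single_le_sum (fun t _ => (hgp t).le) (Finset.mem_univ k)) hGR
      rw [Prod.norm_def, Prod.norm_def]
      refine max_le ?_ (max_le ?_ ?_)
      · refine (pi_norm_le_iff_of_nonneg hRtot0).mpr fun j => ?_
        rw [Real.norm_eq_abs, abs_le]
        constructor
        · linarith [hm j]
        · exact le_trans (hmj j) (le_max_left _ _)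
      · refine (pi_norm_le_iff_of_nonneg hRtot0).mpr fun j => ?_
        rw [Real.norm_eq_abs, abs_le]
        constructor
        · linarith [(hvp j).le]
        · exact le_trans (hvjf j) (le_trans (le_max_left RV RG) (le_max_right RM _))
      · refine (pi_norm_le_iff_of_nonneg hRtot0).mpr fun k => ?_
        rw [Real.norm_eq_abs, abs_le]
        constructor
        · linarith [(hgp k).le]
        · exact le_trans (hgkf k) (le_trans (le_max_right RV RG) (le_max_right RM _))
  refine ⟨?_, ?_⟩
  · intro z hfeas hnorm
    rw [Filter.tendsto_atTop]
    intro cc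
    obtain ⟨R, hR0, hRb⟩ := key cc
    filter_upwards [hnorm.eventually_ge_atTop (R + 1)] with t ht
    by_contra hlt
    push_neg at hlt
    have := hRb (z t) (hfeas t) hlt.le
    linarith
  · intro c
    obtain ⟨R, hR0, hRb⟩ := key c
    refine (Metric.isBounded_closedBall (x := (0 : (Fin p → ℝ) × (Fin p → ℝ) × (Fin p → ℝ))) (r := R)).subset ?_
    rintro z ⟨hzf, hzc⟩
    rw [Metric.mem_closedBall, dist_zero_right]
    exact hRb z hzf hzc
end
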